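/- Let ι be a finite nonempty index set and p : ι → ℝ² with D = diam(p(ι)) ≥ 1 attained by indices a, b; let u = (p(a) − p(b))/D and z = w_{u⊥}(p(ι))/D. Let 0 ≤ Δt ≤ sin(½·arcsin z)/2 and let q : ι → ℝ² with ‖q(i) − p(i)‖ ≤ Δt for all i. Let D′ = diam(q(ι)) be attained by indices c, d, let u′ = (q(c) − q(d))/D′ and z′ = w_{u′⊥}(q(ι))/D′. Then z′ ≥ (sin(½·arcsin z) − 2Δt)/(1 + 2Δt). -/

import Mathlib

open Real
open scoped RealInnerProductSpace

noncomputable section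

/-- The point of `ℝ²` with coordinates `a`, `b`. -/
def pt (a b : ℝ) : EuclideanSpace ℝ (Fin 2) :=
  (WithLp.equiv 2 (Fin 2 → ℝ)).symm ![a, b]

/-- `v` rotated counterclockwise by `π/2`. -/
def perp (v : EuclideanSpace ℝ (Fin 2)) : EuclideanSpace ℝ (Fin 2) :=
  pt (-(v 1)) (v 0)

/-- The extent of a point set `P` along a vector `v`: `max_{p,q ∈ P} ⟨p − q, v⟩`. -/
def wext (v : EuclideanSpace ℝ (Fin 2)) (P : Set (EuclideanSpace ℝ (Fin 2))) : ℝ :=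
  sSup {x : ℝ | ∃ p ∈ P, ∃ q ∈ P, x = ⟪p - q, v⟫}

/-! The old set has extent at least `D sin(½ arcsin z)` in every unit direction `v`: if `v` is
close to `u`, the diametric pair gives it, and otherwise the pair realising the extent `z D` along
`u⊥` does; the two regimes meet at angle `½ arcsin z` from `u`, by
`sin(α/2) = sin α cos(α/2) − cos α sin(α/2)`. Moving every point by at most `Δt` lowers each extent
by at most `2Δt` and raises the diameter to at most `D + 2Δt`; hence
`z' ≥ (D sin(½ arcsin z) − 2Δt)/(D + 2Δt)`, which is at least the claimed bound since `D ≥ 1`. -/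

local notation "ℝ²" => EuclideanSpace ℝ (Fin 2)

lemma perp_apply_zero (v : ℝ²) : perp v 0 = -v 1 := rfl

lemma perp_apply_one (v : ℝ²) : perp v 1 = v 0 := rfl

lemma inner_fin_two (x y : ℝ²) : ⟪x, y⟫ = x 0 * y 0 + x 1 * y 1 := by
  simp only [PiLp.inner_apply, RCLike.inner_apply, conj_trivial, Fin.sum_univ_two]
  ring

lemma norm_sq_fin_two (x : ℝ²) : ‖x‖ ^ 2 = x 0 ^ 2 + x 1 ^ 2 := by
  rw [← real_inner_self_eq_norm_sq, inner_fin_two]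
  ring

lemma norm_perp (v : ℝ²) : ‖perp v‖ = ‖v‖ := by
  have h : ‖perp v‖ ^ 2 = ‖v‖ ^ 2 := by
    rw [norm_sq_fin_two, norm_sq_fin_two, perp_apply_zero, perp_apply_one]
    ring
  exact (pow_left_inj₀ (norm_nonneg _) (norm_nonneg _) two_ne_zero).1 h

lemma inner_eq_inner_mul_add_inner_perp_mul {u : ℝ²} (hu : ‖u‖ = 1) (w v : ℝ²) :
    ⟪w, v⟫ = ⟪w, u⟫ * ⟪u, v⟫ + ⟪w, perp u⟫ * ⟪perp u, v⟫ := by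
  have h : u 0 ^ 2 + u 1 ^ 2 = 1 := by rw [← norm_sq_fin_two, hu, one_pow]
  simp only [inner_fin_two, perp_apply_zero, perp_apply_one]
  linear_combination (-(w 0 * v 0 + w 1 * v 1)) * h

lemma inner_sq_add_inner_perp_sq {u : ℝ²} (hu : ‖u‖ = 1) (v : ℝ²) :
    ⟪u, v⟫ ^ 2 + ⟪perp u, v⟫ ^ 2 = ‖v‖ ^ 2 := by
  rw [← real_inner_self_eq_norm_sq, inner_eq_inner_mul_add_inner_perp_mul hu v v,
    real_inner_comm v u, real_inner_comm v (perp u)]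
  ring

section Extent

variable {ι : Type*} (p : ι → ℝ²) (v : ℝ²)

lemma wext_range_eq_sSup :
    wext v (Set.range p) = sSup (Set.range fun ij : ι × ι => ⟪p ij.1 - p ij.2, v⟫) := by
  unfold wext
  congr 1
  ext x
  constructor
  · rintro ⟨_, ⟨i, rfl⟩, _, ⟨j, rfl⟩, rfl⟩
    exact ⟨(i, j), rfl⟩
  · rintro ⟨⟨i, j⟩, rfl⟩
    exact ⟨p i, ⟨i, rfl⟩, p j, ⟨j, rfl⟩, rfl⟩

variable [Finite ι]

lemma inner_sub_le_wext_range (i j : ι) : ⟪p i - p j, v⟫ ≤ wext v (Set.range p) := by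
  rw [wext_range_eq_sSup]
  exact le_csSup (Set.finite_range _).bddAbove ⟨(i, j), rfl⟩

lemma abs_inner_sub_le_wext_range (i j : ι) : |⟪p i - p j, v⟫| ≤ wext v (Set.range p) := by
  have hji := inner_sub_le_wext_range p v j i
  rw [← neg_sub, inner_neg_left] at hji
  exact abs_le.2 ⟨by linarith, inner_sub_le_wext_range p v i j⟩

variable [Nonempty ι]

lemma exists_wext_range_eq : ∃ i j : ι, wext v (Set.range p) = ⟪p i - p j, v⟫ := by
  obtain ⟨⟨i, j⟩, hij⟩ :
      wext v (Set.range p) ∈ Set.range fun ij : ι × ι => ⟪p ij.1 - p ij.2, v⟫ := by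
    rw [wext_range_eq_sSup]
    exact (Set.range_nonempty _).csSup_mem (Set.finite_range _)
  exact ⟨i, j, hij.symm⟩

lemma wext_range_nonneg : 0 ≤ wext v (Set.range p) := by
  obtain ⟨i⟩ := ‹Nonempty ι›
  simpa using inner_sub_le_wext_range p v i i

lemma wext_range_le_mul_norm {D : ℝ} (hdiam : ∀ i j, dist (p i) (p j) ≤ D) :
    wext v (Set.range p) ≤ D * ‖v‖ := by
  obtain ⟨i, j, hij⟩ := exists_wext_range_eq p v
  rw [hij]
  calc ⟪p i - p j, v⟫ ≤ ‖p i - p j‖ * ‖v‖ := real_inner_le_norm _ _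
    _ ≤ D * ‖v‖ := by
      gcongr
      rw [← dist_eq_norm]
      exact hdiam i j

lemma wext_range_sub_le_wext_range {q : ι → ℝ²} {δ : ℝ} (hq : ∀ i, ‖q i - p i‖ ≤ δ) :
    wext v (Set.range p) - 2 * δ * ‖v‖ ≤ wext v (Set.range q) := by
  obtain ⟨i, j, hij⟩ := exists_wext_range_eq p v
  have hmove (k : ι) : |⟪q k - p k, v⟫| ≤ δ * ‖v‖ :=
    (abs_real_inner_le_norm _ _).trans (by gcongr; exact hq k)
  have hsplit : q i - q j = (p i - p j) + (q i - p i) - (q j - p j) := by abel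
  have hQ := inner_sub_le_wext_range q v i j
  rw [hsplit, inner_sub_left, inner_add_left, ← hij] at hQ
  linarith [abs_le.1 (hmove i), abs_le.1 (hmove j)]

end Extent

lemma dist_le_add_of_forall_dist_le {ι X : Type*} [PseudoMetricSpace X] {p q : ι → X}
    {δ D : ℝ} (hpq : ∀ i, dist (p i) (q i) ≤ δ) (hdiam : ∀ i j, dist (q i) (q j) ≤ D)
    (a b : ι) : dist (p a) (p b) ≤ D + 2 * δ := by
  have := dist_triangle4 (p a) (q a) (q b) (p b)
  linarith [hpq a, hpq b, dist_comm (q b) (p b), hdiam a b]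

lemma norm_inv_smul_sub_eq_one {E : Type*} [SeminormedAddCommGroup E] [NormedSpace ℝ E]
    {x y : E} {D : ℝ} (hxy : dist x y = D) (hD : 0 < D) : ‖D⁻¹ • (x - y)‖ = 1 := by
  rw [norm_smul, ← dist_eq_norm, hxy, norm_inv, Real.norm_of_nonneg hD.le, inv_mul_cancel₀ hD.ne']

lemma mul_sin_half_le {α D x y e w : ℝ} (hα₀ : 0 ≤ α) (hα : α ≤ π) (hD : 0 ≤ D)
    (hxy : x ^ 2 + y ^ 2 = 1) (he : |e| ≤ D * cos α)
    (hx : D * |x| ≤ w) (hy : |e * x + D * sin α * y| ≤ w) : D * sin (α / 2) ≤ w := by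
  have hsin : 0 ≤ sin α := sin_nonneg_of_nonneg_of_le_pi hα₀ hα
  have hsin_half : 0 ≤ sin (α / 2) := sin_nonneg_of_nonneg_of_le_pi (by linarith) (by linarith)
  have hcos_half : 0 ≤ cos (α / 2) := cos_nonneg_of_mem_Icc ⟨by linarith, by linarith⟩
  rcases le_or_gt (sin (α / 2)) |x| with hxs | hxs
  · exact (mul_le_mul_of_nonneg_left hxs hD).trans hx
  have hyc : cos (α / 2) ≤ |y| := by
    have : cos (α / 2) ^ 2 ≤ y ^ 2 := by
      nlinarith [sin_sq_add_cos_sq (α / 2), sq_abs x, abs_nonneg x]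
    simpa [abs_of_nonneg hcos_half] using sq_le_sq.1 this
  calc D * sin (α / 2) = D * sin α * cos (α / 2) - D * cos α * sin (α / 2) := by
        rw [mul_assoc, mul_assoc, ← mul_sub, ← sin_sub, sub_half]
    _ ≤ D * sin α * |y| - |e| * |x| :=
        sub_le_sub (mul_le_mul_of_nonneg_left hyc (mul_nonneg hD hsin))
          (mul_le_mul he hxs.le (abs_nonneg x) ((abs_nonneg e).trans he))
    _ = |D * sin α * y| - |e * x| := by
        rw [abs_mul (D * sin α), abs_of_nonneg (mul_nonneg hD hsin), abs_mul]
    _ ≤ |e * x + D * sin α * y| := by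
        simpa [add_comm] using abs_sub_abs_le_abs_add (D * sin α * y) (e * x)
    _ ≤ w := hy

theorem mul_sin_half_arcsin_le_wext {ι : Type*} [Finite ι] [Nonempty ι] {p : ι → ℝ²} {D : ℝ}
    (hD : 0 < D) (hdiam : ∀ i j, dist (p i) (p j) ≤ D) {a b : ι} {u : ℝ²} (hu : ‖u‖ = 1)
    (hab : p a - p b = D • u) (v : ℝ²) (hv : ‖v‖ = 1) :
    D * sin (arcsin (wext (perp u) (Set.range p) / D) / 2) ≤ wext v (Set.range p) := by
  set z := wext (perp u) (Set.range p) / D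
  have hz₀ : 0 ≤ z := div_nonneg (wext_range_nonneg p _) hD.le
  have hz₁ : z ≤ 1 := by
    rw [div_le_one hD]
    simpa [norm_perp, hu] using wext_range_le_mul_norm p (perp u) hdiam
  obtain ⟨i, j, hij⟩ := exists_wext_range_eq p (perp u)
  have hperp : ⟪p i - p j, perp u⟫ = D * sin (arcsin z) := by
    rw [sin_arcsin (by linarith) hz₁, ← hij, mul_div_cancel₀ _ hD.ne']
  have he : |⟪p i - p j, u⟫| ≤ D * cos (arcsin z) := by
    refine abs_le_of_sq_le_sq ?_ (mul_nonneg hD.le (cos_arcsin_nonneg z))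
    have hpyth := inner_sq_add_inner_perp_sq hu (p i - p j)
    have hdist : ‖p i - p j‖ ^ 2 ≤ D ^ 2 :=
      pow_le_pow_left₀ (norm_nonneg _) (dist_eq_norm (p i) (p j) ▸ hdiam i j) 2
    rw [real_inner_comm (p i - p j) u, real_inner_comm (p i - p j) (perp u), hperp] at hpyth
    linear_combination hdist + hpyth - D ^ 2 * sin_sq_add_cos_sq (arcsin z)
  refine mul_sin_half_le (arcsin_nonneg.2 hz₀)
    ((arcsin_le_pi_div_two z).trans (by linarith [pi_pos])) hD.le
    (by rw [inner_sq_add_inner_perp_sq hu, hv, one_pow]) he ?_ ?_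
  · have hab_v := abs_inner_sub_le_wext_range p v a b
    rwa [hab, real_inner_smul_left, abs_mul, abs_of_pos hD] at hab_v
  · have hij_v := abs_inner_sub_le_wext_range p v i j
    rwa [inner_eq_inner_mul_add_inner_perp_mul hu, hperp] at hij_v

lemma sub_div_one_add_le_div {s δ D D' W : ℝ} (hδ : 0 ≤ δ) (hD : 1 ≤ D)
    (hD' : 0 < D') (hD'D : D' ≤ D + δ) (hW₀ : 0 ≤ W) (hW : D * s - δ ≤ W) :
    (s - δ) / (1 + δ) ≤ W / D' := by
  rcases le_or_gt s δ with hsδ | hδs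
  · exact (div_nonpos_of_nonpos_of_nonneg (by linarith) (by linarith)).trans
      (div_nonneg hW₀ hD'.le)
  rw [div_le_div_iff₀ (by linarith) hD']
  calc (s - δ) * D' ≤ (s - δ) * (D + δ) := mul_le_mul_of_nonneg_left hD'D (by linarith)
    _ = (D * s - δ) * (1 + δ) - δ * (s + 1) * (D - 1) := by ring
    _ ≤ (D * s - δ) * (1 + δ) := by
        have : 0 ≤ δ * (s + 1) * (D - 1) := by
          apply mul_nonneg (mul_nonneg _ _) <;> linarith
        linarith
    _ ≤ W * (1 + δ) := mul_le_mul_of_nonneg_right hW (by linarith)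

theorem stmt_11_general (ι : Type*) [Fintype ι] [Nonempty ι]
    (p : ι → EuclideanSpace ℝ (Fin 2)) (D : ℝ) (hD : 1 ≤ D)
    (a b : ι) (hdiam : ∀ i j, dist (p i) (p j) ≤ D) (hattain : dist (p a) (p b) = D)
    (u : EuclideanSpace ℝ (Fin 2)) (hu : u = D⁻¹ • (p a - p b))
    (z : ℝ) (hz : z = wext (perp u) (Set.range p) / D)
    (Δt : ℝ) (hΔt₀ : 0 ≤ Δt)
    (q : ι → EuclideanSpace ℝ (Fin 2)) (hq : ∀ i, ‖q i - p i‖ ≤ Δt)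
    (D' : ℝ) (c d : ι)
    (hdiam' : ∀ i j, dist (q i) (q j) ≤ D') (hattain' : dist (q c) (q d) = D')
    (u' : EuclideanSpace ℝ (Fin 2)) (hu' : u' = D'⁻¹ • (q c - q d))
    (z' : ℝ) (hz' : z' = wext (perp u') (Set.range q) / D') :
    z' ≥ (Real.sin (1/2 * Real.arcsin z) - 2 * Δt) / (1 + 2 * Δt) := by
  have hD₀ : 0 < D := one_pos.trans_le hD
  have hpq (i : ι) : dist (p i) (q i) ≤ Δt := by rw [dist_eq_norm']; exact hq i
  have hDD' : D ≤ D' + 2 * Δt := hattain ▸ dist_le_add_of_forall_dist_le hpq hdiam' a b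
  have hD'D : D' ≤ D + 2 * Δt :=
    hattain' ▸ dist_le_add_of_forall_dist_le (fun i => dist_comm (p i) (q i) ▸ hpq i) hdiam c d
  rcases (dist_nonneg.trans_eq hattain').eq_or_lt with hD'₀ | hD'₀
  · -- all `q i` coincide, so `z' = 0` by `x / 0 = 0`, while `D ≤ 2 Δt` makes the bound nonpositive
    rw [hz', ← hD'₀, div_zero]
    exact div_nonpos_of_nonpos_of_nonneg (by linarith [sin_le_one (1/2 * arcsin z)]) (by linarith)
  have hv : ‖perp u'‖ = 1 := by rw [norm_perp, hu', norm_inv_smul_sub_eq_one hattain' hD'₀]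
  have hab : p a - p b = D • u := by rw [hu, smul_smul, mul_inv_cancel₀ hD₀.ne', one_smul]
  have hwidth := mul_sin_half_arcsin_le_wext hD₀ hdiam
    (hu ▸ norm_inv_smul_sub_eq_one hattain hD₀) hab (perp u') hv
  have hmoved := wext_range_sub_le_wext_range p (perp u') hq
  rw [← hz, ← one_div_mul_eq_div] at hwidth
  rw [hv, mul_one] at hmoved
  rw [hz', ge_iff_le]
  exact sub_div_one_add_le_div (by linarith) hD hD'₀ hD'D
    (wext_range_nonneg q _) (by linarith)

/-- Lemma 9 of the paper: if a point set with diameter `D ≥ 1` and diametric-box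
aspect ratio `z` moves so that each point travels at most `Δt ≤ sin(½ arcsin z)/2`,
then the new aspect ratio `z′` satisfies `z′ ≥ (sin(½ arcsin z) − 2Δt)/(1 + 2Δt)`. -/
theorem stmt_11 (ι : Type*) [Fintype ι] [Nonempty ι]
    (p : ι → EuclideanSpace ℝ (Fin 2)) (D : ℝ) (hD : 1 ≤ D)
    (a b : ι) (hdiam : ∀ i j, dist (p i) (p j) ≤ D) (hattain : dist (p a) (p b) = D)
    (u : EuclideanSpace ℝ (Fin 2)) (hu : u = D⁻¹ • (p a - p b))
    (z : ℝ) (hz : z = wext (perp u) (Set.range p) / D)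
    (Δt : ℝ) (hΔt₀ : 0 ≤ Δt) (hΔt₁ : Δt ≤ Real.sin (1/2 * Real.arcsin z) / 2)
    (q : ι → EuclideanSpace ℝ (Fin 2)) (hq : ∀ i, ‖q i - p i‖ ≤ Δt)
    (D' : ℝ) (c d : ι)
    (hdiam' : ∀ i j, dist (q i) (q j) ≤ D') (hattain' : dist (q c) (q d) = D')
    (u' : EuclideanSpace ℝ (Fin 2)) (hu' : u' = D'⁻¹ • (q c - q d))
    (z' : ℝ) (hz' : z' = wext (perp u') (Set.range q) / D') :
    z' ≥ (Real.sin (1/2 * Real.arcsin z) - 2 * Δt) / (1 + 2 * Δt) :=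
  stmt_11_general ι p D hD a b hdiam hattain u hu z hz Δt hΔt₀ q hq D' c d hdiam' hattain' u' hu' z'
    hz'

end
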